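/- arXiv:2603.25643 — 9 statements merged into one kernel-verified Lean document; each statement's English description precedes it below -/
import Mathlib

section
/- Let a = (a1, a2) be a unit vector in R^2 with a1 > a2 > 0 and let t satisfy 0 ≤ t ≤ a1 - a2. Then the 1-dimensional volume (length) of the slice {x ∈ [-1/2,1/2]^2 : a1*x1 + a2*x2 = t/2} equals 1/a1. -/
/-!
For `a1 ≠ 0` the line `a1 * x 0 + a2 * x 1 = c` is the graph of an affine function of `x 1`,
so its part in the strip `|x 1| ≤ 1/2` is a segment, of length `1 / |a1|` when `a` is a unit
vector. When `2 |c| + |a2| ≤ |a1|` (for `c = t / 2` this is the chamber condition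
`t ≤ a1 - a2`), every point of that segment also satisfies `|x 0| ≤ 1/2`, so the slice of the
square is the whole segment, and the Hausdorff measure of a segment is its length.
-/

open MeasureTheory

namespace SquareSlice

variable (a1 a2 c : ℝ)

/-- For `a1 ≠ 0`, the line `a1 * x 0 + a2 * x 1 = c`, parametrised by the coordinate `x 1`. -/
noncomputable def lineParam : ℝ →ᵃ[ℝ] EuclideanSpace ℝ (Fin 2) :=
  AffineMap.lineMap !₂[c / a1, 0] !₂[(c - a2) / a1, 1]

@[simp]
lemma lineParam_apply_zero (y : ℝ) : lineParam a1 a2 c y 0 = (c - a2 * y) / a1 := by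
  simp only [lineParam, AffineMap.lineMap_apply, vsub_eq_sub, vadd_eq_add, PiLp.add_apply,
    PiLp.smul_apply, PiLp.sub_apply, Matrix.cons_val_zero, smul_eq_mul]
  ring

@[simp]
lemma lineParam_apply_one (y : ℝ) : lineParam a1 a2 c y 1 = y := by
  simp [lineParam, AffineMap.lineMap_apply]

variable {a1 a2 c}

lemma line_eq_iff_eq_lineParam (ha1 : a1 ≠ 0) (x : EuclideanSpace ℝ (Fin 2)) :
    a1 * x 0 + a2 * x 1 = c ↔ x = lineParam a1 a2 c (x 1) := by
  constructor
  · intro hx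
    ext i
    fin_cases i
    · simp only [Fin.zero_eta, lineParam_apply_zero]
      field_simp
      linarith
    · simp
  · intro hx
    rw [hx, lineParam_apply_zero, lineParam_apply_one]
    field_simp
    ring

lemma dist_lineParam (ha1 : a1 ≠ 0) (hunit : a1 ^ 2 + a2 ^ 2 = 1) (y y' : ℝ) :
    dist (lineParam a1 a2 c y) (lineParam a1 a2 c y') = |y - y'| / |a1| := by
  have hendpoints : dist (!₂[c / a1, 0] : EuclideanSpace ℝ (Fin 2)) !₂[(c - a2) / a1, 1]
      = 1 / |a1| := by
    rw [EuclideanSpace.dist_eq, Fin.sum_univ_two]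
    simp only [Matrix.cons_val_zero, Matrix.cons_val_one, Real.dist_eq, sq_abs]
    rw [show (c / a1 - (c - a2) / a1) ^ 2 + (0 - 1) ^ 2 = (1 / a1) ^ 2 by
      field_simp; linarith, Real.sqrt_sq_eq_abs, abs_div, abs_one]
  rw [lineParam, dist_lineMap_lineMap, hendpoints, Real.dist_eq]
  ring

lemma setOf_strip_line_eq_segment (ha1 : a1 ≠ 0) :
    {x : EuclideanSpace ℝ (Fin 2) | |x 1| ≤ 1 / 2 ∧ a1 * x 0 + a2 * x 1 = c}
      = segment ℝ (lineParam a1 a2 c (-1 / 2)) (lineParam a1 a2 c (1 / 2)) := by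
  rw [← image_segment, segment_eq_Icc (by norm_num)]
  ext x
  simp only [Set.mem_ofPred_eq, Set.mem_image, Set.mem_Icc, line_eq_iff_eq_lineParam ha1]
  constructor
  · rintro ⟨hx1, hx⟩
    rw [abs_le] at hx1
    exact ⟨x 1, ⟨by linarith, hx1.2⟩, hx.symm⟩
  · rintro ⟨y, hy, rfl⟩
    simp only [lineParam_apply_one, abs_le]
    exact ⟨by constructor <;> linarith, trivial⟩

lemma abs_lineParam_apply_zero_le (hc : 2 * |c| + |a2| ≤ |a1|) {y : ℝ} (hy : |y| ≤ 1 / 2) :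
    |lineParam a1 a2 c y 0| ≤ 1 / 2 := by
  rw [lineParam_apply_zero, abs_div]
  rcases eq_or_ne a1 0 with rfl | ha1
  · simp
  rw [div_le_iff₀ (abs_pos.2 ha1)]
  calc |c - a2 * y| ≤ |c| + |a2| * |y| := by
        rw [← abs_mul]
        exact abs_sub _ _
    _ ≤ |c| + |a2| * (1 / 2) := by gcongr
    _ ≤ 1 / 2 * |a1| := by linarith

lemma setOf_square_line_eq_segment (ha1 : a1 ≠ 0) (hc : 2 * |c| + |a2| ≤ |a1|) :
    {x : EuclideanSpace ℝ (Fin 2) | (∀ i, |x i| ≤ 1 / 2) ∧ a1 * x 0 + a2 * x 1 = c}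
      = segment ℝ (lineParam a1 a2 c (-1 / 2)) (lineParam a1 a2 c (1 / 2)) := by
  rw [← setOf_strip_line_eq_segment ha1]
  ext x
  simp only [Set.mem_ofPred_eq, Fin.forall_fin_two]
  constructor
  · rintro ⟨⟨-, hx1⟩, hx⟩
    exact ⟨hx1, hx⟩
  · rintro ⟨hx1, hx⟩
    refine ⟨⟨?_, hx1⟩, hx⟩
    rw [(line_eq_iff_eq_lineParam ha1 x).1 hx]
    exact abs_lineParam_apply_zero_le hc hx1

theorem hausdorffMeasure_square_slice (hunit : a1 ^ 2 + a2 ^ 2 = 1)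
    (hc : 2 * |c| + |a2| ≤ |a1|) :
    μH[1] {x : EuclideanSpace ℝ (Fin 2) | (∀ i, |x i| ≤ 1 / 2) ∧ a1 * x 0 + a2 * x 1 = c}
      = ENNReal.ofReal (1 / |a1|) := by
  have ha1 : a1 ≠ 0 := by
    rintro rfl
    have ha2 : a2 = 0 := abs_nonpos_iff.1 (by rw [abs_zero] at hc; linarith [abs_nonneg c])
    simp [ha2] at hunit
  rw [setOf_square_line_eq_segment ha1 hc, hausdorffMeasure_segment, edist_dist,
    dist_lineParam ha1 hunit]
  norm_num

end SquareSlice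

theorem slice_square_chamber1_volume_general
    (a1 a2 t : ℝ) (hunit : a1 ^ 2 + a2 ^ 2 = 1) (h2 : a2 > 0)
    (ht0 : 0 ≤ t) (ht1 : t ≤ a1 - a2) :
    μH[1] {x : EuclideanSpace ℝ (Fin 2) |
        (∀ i, |x i| ≤ 1 / 2) ∧ a1 * x 0 + a2 * x 1 = t / 2}
      = ENNReal.ofReal (1 / a1) := by
  have ha1 : 0 < a1 := by linarith
  have hc : 2 * |t / 2| + |a2| ≤ |a1| := by
    rw [abs_of_nonneg (by linarith), abs_of_pos h2, abs_of_pos ha1]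
    linarith
  rw [SquareSlice.hausdorffMeasure_square_slice hunit hc, abs_of_pos ha1]

theorem slice_square_chamber1_volume
    (a1 a2 t : ℝ) (hunit : a1 ^ 2 + a2 ^ 2 = 1) (h12 : a1 > a2) (h2 : a2 > 0)
    (ht0 : 0 ≤ t) (ht1 : t ≤ a1 - a2) :
    μH[1] {x : EuclideanSpace ℝ (Fin 2) |
        (∀ i, |x i| ≤ 1 / 2) ∧ a1 * x 0 + a2 * x 1 = t / 2}
      = ENNReal.ofReal (1 / a1) :=
  slice_square_chamber1_volume_general a1 a2 t hunit h2 ht0 ht1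
end

section
/- Let a = (a1, a2) be a unit vector in R^2 with a1 > a2 > 0 and let t satisfy a1 - a2 ≤ t ≤ a1 + a2. Then the length of the slice {x ∈ [-1/2,1/2]^2 : a1*x1 + a2*x2 = t/2} equals (a1 + a2 - t)/(2*a1*a2). -/
/-!
For `0 < a2 ≤ a1` and `a1 - a2 ≤ t ≤ a1 + a2` the line `a1 x₀ + a2 x₁ = t / 2` enters the square
through its top edge and leaves it through its right edge, so the slice is the segment between
these two crossing points: it contains both and is convex, and every point of it lies between
them along the direction `(a2, -a1)`. The Hausdorff length of a segment is the distance of its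
endpoints, here `(a1 + a2 - t) / (2 a1 a2) · ‖(a2, -a1)‖`.
-/

open MeasureTheory

section SquareSlice

variable {a1 a2 t : ℝ}

def squareSlice (a1 a2 t : ℝ) : Set (EuclideanSpace ℝ (Fin 2)) :=
  {x | (∀ i, |x i| ≤ 1 / 2) ∧ a1 * x 0 + a2 * x 1 = t / 2}

noncomputable def squareSliceTopEnd (a1 a2 t : ℝ) : EuclideanSpace ℝ (Fin 2) :=
  !₂[(t - a2) / (2 * a1), 1 / 2]

noncomputable def squareSliceRightEnd (a1 a2 t : ℝ) : EuclideanSpace ℝ (Fin 2) :=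
  !₂[1 / 2, (t - a1) / (2 * a2)]

noncomputable def lineDirection (a1 a2 : ℝ) : EuclideanSpace ℝ (Fin 2) := !₂[a2, -a1]

theorem norm_lineDirection : ‖lineDirection a1 a2‖ = √(a1 ^ 2 + a2 ^ 2) := by
  rw [EuclideanSpace.norm_eq, Fin.sum_univ_two]
  simp [lineDirection, add_comm]

theorem convex_squareSlice : Convex ℝ (squareSlice a1 a2 t) := by
  have hbox : Convex ℝ {x : EuclideanSpace ℝ (Fin 2) | ∀ i, |x i| ≤ 1 / 2} := by
    simp only [Set.ofPred_forall, abs_le]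
    exact convex_iInter fun i =>
      (convex_Icc _ _).linear_preimage (EuclideanSpace.proj i).toLinearMap
  have hline : Convex ℝ {x : EuclideanSpace ℝ (Fin 2) | a1 * x 0 + a2 * x 1 = t / 2} :=
    convex_hyperplane ⟨fun x y => by simp only [PiLp.add_apply]; ring,
      fun c x => by simp only [PiLp.smul_apply, smul_eq_mul]; ring⟩ _
  exact hbox.inter hline

theorem squareSliceTopEnd_mem (ha1 : 0 < a1) (hlo : a2 - a1 ≤ t) (hhi : t ≤ a1 + a2) :
    squareSliceTopEnd a1 a2 t ∈ squareSlice a1 a2 t := by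
  simp only [squareSlice, squareSliceTopEnd, Set.mem_ofPred_eq, Fin.forall_fin_two,
    Matrix.cons_val_zero, Matrix.cons_val_one, Matrix.cons_val_fin_one]
  refine ⟨⟨abs_le.2 ⟨?_, ?_⟩, by norm_num⟩, ?_⟩
  · rw [le_div_iff₀ (by positivity)]; linarith
  · rw [div_le_iff₀ (by positivity)]; linarith
  · field_simp
    ring

theorem squareSliceRightEnd_mem_line (ha2 : a2 ≠ 0) :
    a1 * squareSliceRightEnd a1 a2 t 0 + a2 * squareSliceRightEnd a1 a2 t 1 = t / 2 := by
  simp only [squareSliceRightEnd, PiLp.toLp_apply, Matrix.cons_val_zero, Matrix.cons_val_one,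
    Matrix.cons_val_fin_one]
  field_simp
  ring

theorem squareSliceRightEnd_mem (ha2 : 0 < a2) (hlo : a1 - a2 ≤ t) (hhi : t ≤ a1 + a2) :
    squareSliceRightEnd a1 a2 t ∈ squareSlice a1 a2 t := by
  refine ⟨Fin.forall_fin_two.2 ⟨by norm_num [squareSliceRightEnd], ?_⟩,
    squareSliceRightEnd_mem_line ha2.ne'⟩
  simp only [squareSliceRightEnd, PiLp.toLp_apply, Matrix.cons_val_one, Matrix.cons_val_fin_one]
  refine abs_le.2 ⟨?_, ?_⟩
  · rw [le_div_iff₀ (by positivity)]; linarith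
  · rw [div_le_iff₀ (by positivity)]; linarith

theorem sub_squareSliceTopEnd_eq_smul (ha1 : a1 ≠ 0) (ha2 : a2 ≠ 0)
    {x : EuclideanSpace ℝ (Fin 2)} (hx : a1 * x 0 + a2 * x 1 = t / 2) :
    x - squareSliceTopEnd a1 a2 t =
      ((x 0 - (t - a2) / (2 * a1)) / a2) • lineDirection a1 a2 := by
  ext i
  fin_cases i <;>
    simp only [squareSliceTopEnd, lineDirection, PiLp.sub_apply, PiLp.smul_apply, smul_eq_mul,
      Fin.zero_eta, Fin.mk_one, Matrix.cons_val_zero, Matrix.cons_val_one,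
      Matrix.cons_val_fin_one] <;>
    field_simp
  linear_combination 2 * hx

theorem squareSlice_subset_segment (ha1 : 0 < a1) (ha2 : 0 < a2) :
    squareSlice a1 a2 t ⊆ segment ℝ (squareSliceTopEnd a1 a2 t) (squareSliceRightEnd a1 a2 t) := by
  rintro x ⟨hbox, hx⟩
  have hx0 := abs_le.1 (hbox 0)
  have hx1 := abs_le.1 (hbox 1)
  have hxP := sub_squareSliceTopEnd_eq_smul ha1.ne' ha2.ne' hx
  have hQP := sub_squareSliceTopEnd_eq_smul ha1.ne' ha2.ne'
    (squareSliceRightEnd_mem_line (t := t) ha2.ne')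
  have hQx : squareSliceRightEnd a1 a2 t - x = ((1 / 2 - x 0) / a2) • lineDirection a1 a2 := by
    rw [← sub_sub_sub_cancel_right _ x (squareSliceTopEnd a1 a2 t), hxP, hQP, ← sub_smul]
    congr 1
    simp only [squareSliceRightEnd, PiLp.toLp_apply, Matrix.cons_val_zero]
    ring
  have hxP_nonneg : 0 ≤ (x 0 - (t - a2) / (2 * a1)) / a2 := by
    refine div_nonneg (sub_nonneg.2 ?_) ha2.le
    rw [div_le_iff₀ (by positivity)]
    nlinarith
  have hQx_nonneg : 0 ≤ (1 / 2 - x 0) / a2 := div_nonneg (by linarith) ha2.le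
  rw [mem_segment_iff_sameRay, hxP, hQx]
  exact (SameRay.sameRay_nonneg_smul_left _ hxP_nonneg).nonneg_smul_right hQx_nonneg

theorem squareSlice_eq_segment (ha1 : 0 < a1) (ha2 : 0 < a2) (hlo : |a1 - a2| ≤ t)
    (hhi : t ≤ a1 + a2) :
    squareSlice a1 a2 t = segment ℝ (squareSliceTopEnd a1 a2 t) (squareSliceRightEnd a1 a2 t) := by
  obtain ⟨hlo₁, hlo₂⟩ := abs_sub_le_iff.1 hlo
  exact (squareSlice_subset_segment ha1 ha2).antisymm <|
    convex_squareSlice.segment_subset (squareSliceTopEnd_mem ha1 hlo₂ hhi)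
      (squareSliceRightEnd_mem ha2 hlo₁ hhi)

theorem dist_squareSliceTopEnd_rightEnd (ha1 : 0 < a1) (ha2 : 0 < a2) (hhi : t ≤ a1 + a2) :
    dist (squareSliceTopEnd a1 a2 t) (squareSliceRightEnd a1 a2 t) =
      (a1 + a2 - t) / (2 * a1 * a2) * √(a1 ^ 2 + a2 ^ 2) := by
  rw [dist_comm, dist_eq_norm, sub_squareSliceTopEnd_eq_smul ha1.ne' ha2.ne'
    (squareSliceRightEnd_mem_line ha2.ne'), norm_smul, norm_lineDirection, Real.norm_eq_abs]
  have hcoeff : (squareSliceRightEnd a1 a2 t 0 - (t - a2) / (2 * a1)) / a2 =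
      (a1 + a2 - t) / (2 * a1 * a2) := by
    simp only [squareSliceRightEnd, PiLp.toLp_apply, Matrix.cons_val_zero]
    field_simp
    ring
  rw [hcoeff, abs_of_nonneg (div_nonneg (by linarith) (by positivity))]

theorem hausdorffMeasure_squareSlice (ha1 : 0 < a1) (ha2 : 0 < a2) (hlo : |a1 - a2| ≤ t)
    (hhi : t ≤ a1 + a2) :
    μH[1] (squareSlice a1 a2 t) =
      ENNReal.ofReal ((a1 + a2 - t) / (2 * a1 * a2) * √(a1 ^ 2 + a2 ^ 2)) := by
  rw [squareSlice_eq_segment ha1 ha2 hlo hhi, hausdorffMeasure_segment, edist_dist,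
    dist_squareSliceTopEnd_rightEnd ha1 ha2 hhi]

end SquareSlice

theorem slice_square_chamber2_volume
    (a1 a2 t : ℝ) (hunit : a1 ^ 2 + a2 ^ 2 = 1) (h12 : a1 > a2) (h2 : a2 > 0)
    (ht0 : a1 - a2 ≤ t) (ht1 : t ≤ a1 + a2) :
    μH[1] {x : EuclideanSpace ℝ (Fin 2) |
        (∀ i, |x i| ≤ 1 / 2) ∧ a1 * x 0 + a2 * x 1 = t / 2}
      = ENNReal.ofReal ((a1 + a2 - t) / (2 * a1 * a2)) := by
  have hlo : |a1 - a2| ≤ t := by rwa [abs_of_pos (sub_pos.2 h12)]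
  have h := hausdorffMeasure_squareSlice (h2.trans h12) h2 hlo ht1
  rwa [hunit, Real.sqrt_one, mul_one] at h
end

section
/- Let a = (a1, a2) be a unit vector in R^2 with a1 > a2 > 0 and let t satisfy 0 ≤ t ≤ a1 - a2. Then the 2-dimensional Lebesgue measure of the slab {x ∈ [-1/2,1/2]^2 : |a1*x1 + a2*x2| ≤ t/2} equals t/a1. -/
open MeasureTheory

/-! Since `|a2| + t ≤ a1`, the slab condition `|a1 x + a2 y| ≤ t / 2` together with `|y| ≤ 1/2`
already forces `|x| ≤ 1/2`. So every slice of the slab at fixed `y ∈ [-1/2, 1/2]` is a full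
interval of length `t / a1`, and Fubini gives the volume `t / a1`. -/

theorem EuclideanSpace.volume_preserving_finTwo :
    MeasurePreserving (fun x : EuclideanSpace ℝ (Fin 2) => (x 0, x 1)) :=
  (volume_preserving_finTwoArrow ℝ).comp (PiLp.volume_preserving_ofLp (Fin 2))

theorem Real.volume_abs_mul_add_le {a : ℝ} (ha : 0 < a) (c r : ℝ) :
    volume {x : ℝ | |a * x + c| ≤ r} = ENNReal.ofReal (2 * r / a) := by
  have hIcc : {x : ℝ | |a * x + c| ≤ r} = Set.Icc ((-r - c) / a) ((r - c) / a) := by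
    ext x
    simp only [Set.mem_ofPred_eq, Set.mem_Icc, abs_le, div_le_iff₀ ha, le_div_iff₀ ha]
    constructor <;> rintro ⟨h₁, h₂⟩ <;> constructor <;> linarith
  rw [hIcc, Real.volume_Icc]
  congr 1
  ring

theorem abs_le_half_of_abs_mul_add_le {a b t x y : ℝ} (ha : 0 < a) (hab : |b| + t ≤ a)
    (hy : |y| ≤ 1 / 2) (hxy : |a * x + b * y| ≤ t / 2) : |x| ≤ 1 / 2 := by
  have hby : |b * y| ≤ |b| / 2 := by
    rw [abs_mul]
    nlinarith [abs_nonneg b]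
  have hax : a * |x| ≤ a / 2 := by
    calc a * |x| = |(a * x + b * y) - b * y| := by
          rw [add_sub_cancel_right, abs_mul, abs_of_pos ha]
      _ ≤ |a * x + b * y| + |b * y| := abs_sub _ _
      _ ≤ a / 2 := by linarith
  exact le_of_mul_le_mul_left (by linarith) ha

def unitSquareSlab (a b t : ℝ) : Set (ℝ × ℝ) :=
  {p | |p.1| ≤ 1 / 2 ∧ |p.2| ≤ 1 / 2 ∧ |a * p.1 + b * p.2| ≤ t / 2}

theorem measurableSet_unitSquareSlab (a b t : ℝ) : MeasurableSet (unitSquareSlab a b t) :=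
  (measurableSet_le measurable_fst.abs measurable_const).inter
    ((measurableSet_le measurable_snd.abs measurable_const).inter
      (measurableSet_le ((measurable_fst.const_mul a).add (measurable_snd.const_mul b)).abs
        measurable_const))

theorem volume_unitSquareSlab_slice {a b t : ℝ} (ha : 0 < a) (hab : |b| + t ≤ a) (y : ℝ) :
    volume ((fun x => (x, y)) ⁻¹' unitSquareSlab a b t)
      = (Metric.closedBall 0 (1 / 2)).indicator (fun _ => ENNReal.ofReal (t / a)) y := by
  by_cases hy : |y| ≤ 1 / 2
  · have hslice :
        (fun x => (x, y)) ⁻¹' unitSquareSlab a b t = {x | |a * x + b * y| ≤ t / 2} := by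
      ext x
      exact ⟨fun h => h.2.2, fun h => ⟨abs_le_half_of_abs_mul_add_le ha hab hy h, hy, h⟩⟩
    rw [hslice, Real.volume_abs_mul_add_le ha, Set.indicator_of_mem (by simpa using hy)]
    congr 1
    ring
  · have hslice : (fun x => (x, y)) ⁻¹' unitSquareSlab a b t = ∅ :=
      Set.eq_empty_of_forall_notMem fun x h => hy h.2.1
    rw [hslice, measure_empty, Set.indicator_of_notMem (by simpa using hy)]

theorem volume_unitSquareSlab {a b t : ℝ} (ha : 0 < a) (hab : |b| + t ≤ a) :
    volume (unitSquareSlab a b t) = ENNReal.ofReal (t / a) := by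
  rw [Measure.volume_eq_prod, Measure.prod_apply_symm (measurableSet_unitSquareSlab a b t)]
  simp_rw [volume_unitSquareSlab_slice ha hab]
  rw [lintegral_indicator_const measurableSet_closedBall, Real.volume_closedBall]
  norm_num

theorem slab_square_chamber1_volume_general
    (a1 a2 t : ℝ) (h12 : a1 > a2) (h2 : a2 > 0)
    (ht1 : t ≤ a1 - a2) :
    volume {x : EuclideanSpace ℝ (Fin 2) |
        (∀ i, |x i| ≤ 1 / 2) ∧ |a1 * x 0 + a2 * x 1| ≤ t / 2}
      = ENNReal.ofReal (t / a1) := by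
  have hset : {x : EuclideanSpace ℝ (Fin 2) |
        (∀ i, |x i| ≤ 1 / 2) ∧ |a1 * x 0 + a2 * x 1| ≤ t / 2}
      = (fun x : EuclideanSpace ℝ (Fin 2) => (x 0, x 1)) ⁻¹' unitSquareSlab a1 a2 t := by
    ext x
    simp only [Fin.forall_fin_two, Set.mem_ofPred_eq, Set.mem_preimage, unitSquareSlab, and_assoc]
  rw [hset, EuclideanSpace.volume_preserving_finTwo.measure_preimage
    (measurableSet_unitSquareSlab a1 a2 t).nullMeasurableSet]
  exact volume_unitSquareSlab (h2.trans h12) (by rw [abs_of_pos h2]; linarith)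

theorem slab_square_chamber1_volume
    (a1 a2 t : ℝ) (hunit : a1 ^ 2 + a2 ^ 2 = 1) (h12 : a1 > a2) (h2 : a2 > 0)
    (ht0 : 0 ≤ t) (ht1 : t ≤ a1 - a2) :
    volume {x : EuclideanSpace ℝ (Fin 2) |
        (∀ i, |x i| ≤ 1 / 2) ∧ |a1 * x 0 + a2 * x 1| ≤ t / 2}
      = ENNReal.ofReal (t / a1) :=
  slab_square_chamber1_volume_general a1 a2 t h12 h2 ht1
end

section
/- Let a = (a1, a2, a3) be a unit vector in R^3 with a1 ≥ a2 ≥ a3 > 0 and let t satisfy a1 + a2 - a3 ≤ t ≤ a1 + a2 + a3. Then the 3-dimensional Lebesgue measure of the slab {x ∈ [-1/2,1/2]^3 : |⟨a,x⟩| ≤ t/2} equals 1 - (a1 + a2 + a3 - t)^3/(24*a1*a2*a3). -/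
/-!
Substituting `u = 1/2 - x`, the cap of the cube cut off by `⟨a, x⟩ > t/2` becomes the corner
simplex `{u ≥ 0, ⟨a, u⟩ < d}` with `d = (a₁ + a₂ + a₃ - t)/2`; the hypothesis on `t` says
`d ≤ min aᵢ`, so this simplex lies inside the cube. Slicing off the first coordinate and
integrating gives, by induction on the dimension, the volume `dⁿ / (n! ∏ aᵢ)` of the simplex.
The cap `⟨a, x⟩ < -t/2` is the reflection of the first one, so the slab has volume
`1 - 2 d³ / (6 a₁ a₂ a₃)`.
-/

open MeasureTheory Set
open scoped Nat Pointwise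

variable {n : ℕ}

def cornerSimplex (a : Fin n → ℝ) (d : ℝ) : Set (Fin n → ℝ) :=
  {u | (∀ i, 0 ≤ u i) ∧ ∑ i, a i * u i < d}

theorem cornerSimplex_eq_empty {a : Fin n → ℝ} {d : ℝ} (ha : ∀ i, 0 ≤ a i) (hd : d ≤ 0) :
    cornerSimplex a d = ∅ :=
  eq_empty_of_forall_notMem fun _ ⟨hu, hlt⟩ =>
    (hlt.trans_le hd).not_ge (Finset.sum_nonneg fun i _ => mul_nonneg (ha i) (hu i))

theorem measurableSet_cornerSimplex (a : Fin n → ℝ) (d : ℝ) :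
    MeasurableSet (cornerSimplex a d) := by
  simp only [cornerSimplex, ofPred_and, ofPred_forall]
  exact (MeasurableSet.iInter fun i =>
    measurableSet_le measurable_const (measurable_pi_apply i)).inter
    (measurableSet_lt (by fun_prop) measurable_const)

theorem lt_one_of_mem_cornerSimplex {a u : Fin n → ℝ} {d : ℝ} (ha : ∀ i, 0 < a i)
    (hu : u ∈ cornerSimplex a d) {i : Fin n} (hd : d ≤ a i) : u i < 1 := by
  have hle : a i * u i ≤ ∑ j, a j * u j :=
    Finset.single_le_sum (fun j _ => mul_nonneg (ha j).le (hu.1 j)) (Finset.mem_univ i)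
  nlinarith [hu.2, ha i]

theorem preimage_piFinSuccAbove_symm_cornerSimplex (a : Fin (n + 1) → ℝ) (d : ℝ) :
    (MeasurableEquiv.piFinSuccAbove (fun _ => ℝ) 0).symm ⁻¹' cornerSimplex a d =
      {p | 0 ≤ p.1 ∧ p.2 ∈ cornerSimplex (Fin.tail a) (d - a 0 * p.1)} := by
  ext p
  simp only [MeasurableEquiv.piFinSuccAbove_symm_apply, Fin.insertNthEquiv_zero, cornerSimplex,
    Fin.forall_fin_succ, Fin.sum_univ_succ, preimage_ofPred_eq, Fin.consEquiv_apply,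
    Fin.cons_zero, Fin.cons_succ, mem_ofPred_eq, Fin.tail]
  constructor
  · rintro ⟨⟨h0, hp⟩, hlt⟩
    exact ⟨h0, hp, by linarith⟩
  · rintro ⟨h0, hp, hlt⟩
    exact ⟨⟨h0, hp⟩, by linarith⟩

theorem setLIntegral_Ico_ofReal_sub_mul_pow_div {c d K : ℝ} (hc : 0 < c) (hd : 0 ≤ d)
    (hK : 0 < K) (n : ℕ) :
    ∫⁻ x in Ico 0 (d / c), ENNReal.ofReal ((d - c * x) ^ n / K)
      = ENNReal.ofReal (d ^ (n + 1) / ((n + 1) * c * K)) := by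
  have hnonneg : ∀ x ∈ Ico 0 (d / c), 0 ≤ (d - c * x) ^ n / K := fun x hx => by
    have := (lt_div_iff₀' hc).1 hx.2
    exact div_nonneg (pow_nonneg (by linarith) n) hK.le
  rw [← ofReal_integral_eq_lintegral_ofReal
      ((Continuous.integrableOn_Icc (by fun_prop)).mono_set Ico_subset_Icc_self)
      (ae_restrict_of_forall_mem measurableSet_Ico hnonneg),
    ← integral_Icc_eq_integral_Ico, integral_Icc_eq_integral_Ioc,
    ← intervalIntegral.integral_of_le (by positivity), intervalIntegral.integral_div,
    intervalIntegral.integral_comp_sub_mul (· ^ n) hc.ne', integral_pow,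
    mul_div_cancel₀ _ hc.ne', mul_zero, sub_zero, sub_self, zero_pow n.succ_ne_zero, sub_zero,
    smul_eq_mul]
  congr 1
  field_simp

theorem volume_cornerSimplex {a : Fin n → ℝ} {d : ℝ} (ha : ∀ i, 0 < a i) (hd : 0 < d) :
    volume (cornerSimplex a d) = ENNReal.ofReal (d ^ n / (n ! * ∏ i, a i)) := by
  induction n generalizing d with
  | zero => simp [cornerSimplex, hd, volume_pi]
  | succ n ih =>
    set K : ℝ := n ! * ∏ i, Fin.tail a i
    have hK : 0 < K := mul_pos (by positivity) (Finset.prod_pos fun i _ => ha _)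
    have hT := (measurableSet_cornerSimplex a d).preimage
      (MeasurableEquiv.piFinSuccAbove (fun _ => ℝ) 0).symm.measurable
    rw [preimage_piFinSuccAbove_symm_cornerSimplex] at hT
    set T : Set (ℝ × (Fin n → ℝ)) :=
      {p | 0 ≤ p.1 ∧ p.2 ∈ cornerSimplex (Fin.tail a) (d - a 0 * p.1)}
    have hslice : ∀ x : ℝ, volume (Prod.mk x ⁻¹' T)
        = (Ico 0 (d / a 0)).indicator (fun x => ENNReal.ofReal ((d - a 0 * x) ^ n / K)) x := by
      intro x
      by_cases h0 : 0 ≤ x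
      · have hTx : Prod.mk x ⁻¹' T = cornerSimplex (Fin.tail a) (d - a 0 * x) := by
          ext; simp [T, h0]
        rw [hTx]
        by_cases hx : x < d / a 0
        · rw [indicator_of_mem (mem_Ico.2 ⟨h0, hx⟩),
            ih (a := Fin.tail a) (fun i => ha _) (sub_pos.2 ((lt_div_iff₀' (ha 0)).1 hx))]
        · rw [indicator_of_notMem (fun h => hx h.2),
            cornerSimplex_eq_empty (a := Fin.tail a) (fun i => (ha _).le)
              (sub_nonpos.2 ((div_le_iff₀' (ha 0)).1 (not_lt.1 hx))), measure_empty]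
      · rw [indicator_of_notMem (fun h => h0 h.1)]
        simp [T, h0]
    rw [← ((volume_preserving_piFinSuccAbove _ 0).symm _).measure_preimage_equiv,
      preimage_piFinSuccAbove_symm_cornerSimplex, Measure.volume_eq_prod,
      Measure.prod_apply hT, lintegral_congr hslice, lintegral_indicator measurableSet_Ico,
      setLIntegral_Ico_ofReal_sub_mul_pow_div (ha 0) hd.le hK, Nat.factorial_succ,
      Fin.prod_univ_succ]
    simp only [K, Fin.tail]
    push_cast
    congr 1
    ring

theorem volume_cornerSimplex_of_nonneg (hn : n ≠ 0) {a : Fin n → ℝ} {d : ℝ} (ha : ∀ i, 0 < a i)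
    (hd : 0 ≤ d) : volume (cornerSimplex a d) = ENNReal.ofReal (d ^ n / (n ! * ∏ i, a i)) := by
  rcases hd.eq_or_lt with rfl | hd
  · simp [cornerSimplex_eq_empty (fun i => (ha i).le) le_rfl, hn]
  · exact volume_cornerSimplex ha hd

theorem volume_cube_half : volume {x : Fin n → ℝ | ∀ i, |x i| ≤ 1 / 2} = 1 := by
  have : {x : Fin n → ℝ | ∀ i, |x i| ≤ 1 / 2} = Metric.closedBall 0 (1 / 2) := by
    ext x
    simp [pi_norm_le_iff_of_nonneg]
  rw [this, Real.volume_pi_closedBall _ (by norm_num)]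
  norm_num

def cubeCap (a : Fin n → ℝ) (t : ℝ) : Set (Fin n → ℝ) :=
  {x | (∀ i, |x i| ≤ 1 / 2) ∧ t / 2 < ∑ i, a i * x i}

theorem sum_mul_half_sub (a x : Fin n → ℝ) :
    ∑ i, a i * (1 / 2 - x i) = (∑ i, a i) / 2 - ∑ i, a i * x i := by
  simp only [mul_sub, Finset.sum_sub_distrib, Finset.sum_div]
  congr 1
  exact Finset.sum_congr rfl fun i _ => by ring

theorem cubeCap_eq_preimage_cornerSimplex {a : Fin n → ℝ} {t : ℝ} (ha : ∀ i, 0 < a i)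
    (hd : ∀ i, (∑ j, a j - t) / 2 ≤ a i) :
    cubeCap a t = (fun x => (fun _ => 1 / 2) - x) ⁻¹' cornerSimplex a ((∑ i, a i - t) / 2) := by
  ext x
  have hsum := sum_mul_half_sub a x
  simp only [cubeCap, cornerSimplex, mem_preimage, mem_ofPred_eq, Pi.sub_apply] at hsum ⊢
  constructor
  · rintro ⟨hx, hlt⟩
    exact ⟨fun i => by linarith [(abs_le.1 (hx i)).2], by linarith⟩
  · intro hu
    refine ⟨fun i => abs_le.2 ⟨?_, by linarith [hu.1 i]⟩, by linarith [hu.2]⟩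
    linarith [lt_one_of_mem_cornerSimplex ha hu (hd i)]

theorem measurableSet_cubeCap (a : Fin n → ℝ) (t : ℝ) : MeasurableSet (cubeCap a t) := by
  simp only [cubeCap, ofPred_and, ofPred_forall]
  exact (MeasurableSet.iInter fun i =>
    measurableSet_le (measurable_pi_apply i).abs measurable_const).inter
    (measurableSet_lt measurable_const (by fun_prop))

theorem volume_cubeCap (hn : n ≠ 0) {a : Fin n → ℝ} {t : ℝ} (ha : ∀ i, 0 < a i)
    (ht : t ≤ ∑ i, a i) (hd : ∀ i, (∑ j, a j - t) / 2 ≤ a i) :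
    volume (cubeCap a t) = ENNReal.ofReal (((∑ i, a i - t) / 2) ^ n / (n ! * ∏ i, a i)) := by
  rw [cubeCap_eq_preimage_cornerSimplex ha hd,
    (Measure.measurePreserving_sub_left volume _).measure_preimage
      (measurableSet_cornerSimplex _ _).nullMeasurableSet,
    volume_cornerSimplex_of_nonneg hn ha (by linarith)]

theorem disjoint_cubeCap_neg (a : Fin n → ℝ) {t : ℝ} (ht : 0 ≤ t) :
    Disjoint (cubeCap a t) (-cubeCap a t) :=
  disjoint_left.2 fun x hx hx' => by
    simp only [cubeCap, mem_neg, mem_ofPred_eq, Pi.neg_apply, mul_neg,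
      Finset.sum_neg_distrib] at hx hx'
    linarith [hx.2, hx'.2]

theorem cubeCap_union_neg_subset (a : Fin n → ℝ) (t : ℝ) :
    cubeCap a t ∪ -cubeCap a t ⊆ {x | ∀ i, |x i| ≤ 1 / 2} :=
  union_subset (fun _ hx => hx.1) fun x hx => by simpa [cubeCap] using hx.1

theorem cube_inter_slab_eq_sdiff (a : Fin n → ℝ) (t : ℝ) :
    {x : Fin n → ℝ | (∀ i, |x i| ≤ 1 / 2) ∧ |∑ i, a i * x i| ≤ t / 2} =
      {x | ∀ i, |x i| ≤ 1 / 2} \ (cubeCap a t ∪ -cubeCap a t) := by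
  ext x
  simp only [cubeCap, mem_sdiff, mem_union, mem_neg, mem_ofPred_eq, Pi.neg_apply, abs_neg,
    mul_neg, Finset.sum_neg_distrib]
  rw [abs_le]
  constructor
  · rintro ⟨hx, hlo, hhi⟩
    exact ⟨hx, by rintro (⟨-, h⟩ | ⟨-, h⟩) <;> linarith⟩
  · rintro ⟨hx, hout⟩
    refine ⟨hx, ?_, ?_⟩ <;> by_contra! h
    · exact hout (Or.inr ⟨hx, by linarith⟩)
    · exact hout (Or.inl ⟨hx, h⟩)

theorem volume_cube_inter_slab (hn : n ≠ 0) {a : Fin n → ℝ} {t : ℝ} (ha : ∀ i, 0 < a i)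
    (ht0 : 0 ≤ t) (ht : t ≤ ∑ i, a i) (hd : ∀ i, (∑ j, a j - t) / 2 ≤ a i) :
    volume {x : Fin n → ℝ | (∀ i, |x i| ≤ 1 / 2) ∧ |∑ i, a i * x i| ≤ t / 2} =
      ENNReal.ofReal (1 - 2 * (((∑ i, a i - t) / 2) ^ n / (n ! * ∏ i, a i))) := by
  have hcap_nonneg : 0 ≤ ((∑ i, a i - t) / 2) ^ n / (n ! * ∏ i, a i) :=
    div_nonneg (pow_nonneg (by linarith) n)
      (mul_nonneg (by positivity) (Finset.prod_nonneg fun i _ => (ha i).le))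
  have hsub := cubeCap_union_neg_subset a t
  have hmeas := measurableSet_cubeCap a t
  rw [cube_inter_slab_eq_sdiff, measure_sdiff hsub (hmeas.union hmeas.neg).nullMeasurableSet
      (ne_top_of_le_ne_top (volume_cube_half ▸ ENNReal.one_ne_top) (measure_mono hsub)),
    measure_union (disjoint_cubeCap_neg a ht0) hmeas.neg, Measure.measure_neg,
    volume_cubeCap hn ha ht hd, volume_cube_half, ← ENNReal.ofReal_add hcap_nonneg hcap_nonneg,
    ← ENNReal.ofReal_one, ← ENNReal.ofReal_sub _ (by positivity), two_mul]

theorem slab_cube3_g5_general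
    (a1 a2 a3 t : ℝ)
    (h12 : a1 ≥ a2) (h23 : a2 ≥ a3) (h3 : a3 > 0)
    (ht0 : a1 + a2 - a3 ≤ t) (ht1 : t ≤ a1 + a2 + a3) :
    volume {x : EuclideanSpace ℝ (Fin 3) |
        (∀ i, |x i| ≤ 1 / 2) ∧ |a1 * x 0 + a2 * x 1 + a3 * x 2| ≤ t / 2}
      = ENNReal.ofReal (1 - (a1 + a2 + a3 - t) ^ 3 / (24 * a1 * a2 * a3)) := by
  set a : Fin 3 → ℝ := ![a1, a2, a3]
  have hsum : ∑ i, a i = a1 + a2 + a3 := Fin.sum_univ_three a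
  have ha : ∀ i, 0 < a i := by
    intro i; fin_cases i <;> dsimp [a] <;> linarith
  have hd : ∀ i, (∑ j, a j - t) / 2 ≤ a i := by
    intro i; fin_cases i <;> dsimp [a] <;> linarith
  have hset : {x : EuclideanSpace ℝ (Fin 3) |
      (∀ i, |x i| ≤ 1 / 2) ∧ |a1 * x 0 + a2 * x 1 + a3 * x 2| ≤ t / 2} =
      (MeasurableEquiv.toLp 2 (Fin 3 → ℝ)).symm ⁻¹'
        {x | (∀ i, |x i| ≤ 1 / 2) ∧ |∑ i, a i * x i| ≤ t / 2} := by
    ext x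
    simp [a, Fin.sum_univ_three]
  rw [hset, (EuclideanSpace.volume_preserving_symm_measurableEquiv_toLp _).measure_preimage_equiv,
    volume_cube_inter_slab three_ne_zero ha (by linarith) (hsum ▸ ht1) hd, hsum,
    Fin.prod_univ_three]
  congr 1
  simp only [a, Matrix.cons_val]
  field_simp
  ring

theorem slab_cube3_g5
    (a1 a2 a3 t : ℝ) (hunit : a1 ^ 2 + a2 ^ 2 + a3 ^ 2 = 1)
    (h12 : a1 ≥ a2) (h23 : a2 ≥ a3) (h3 : a3 > 0)
    (ht0 : a1 + a2 - a3 ≤ t) (ht1 : t ≤ a1 + a2 + a3) :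
    volume {x : EuclideanSpace ℝ (Fin 3) |
        (∀ i, |x i| ≤ 1 / 2) ∧ |a1 * x 0 + a2 * x 1 + a3 * x 2| ≤ t / 2}
      = ENNReal.ofReal (1 - (a1 + a2 + a3 - t) ^ 3 / (24 * a1 * a2 * a3)) :=
  slab_cube3_g5_general a1 a2 a3 t h12 h23 h3 ht0 ht1
end

section
/- Let a = (a1, a2, a3) be a unit vector in R^3 with a1 ≥ a2 ≥ a3 > 0, a1 ≥ a2 + a3, and let t satisfy 0 ≤ t ≤ a1 - a2 - a3. Then the 3-dimensional Lebesgue measure of the slab {x ∈ [-1/2,1/2]^3 : |⟨a,x⟩| ≤ t/2} equals t/a1. -/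
open MeasureTheory Set

/-!
Split `x = (y, z)` with `y = x₀`. When `t + ∑_{i ≥ 1} |aᵢ| ≤ a₀`, for every `z` in the unit cube the
set of `y` with `|a₀ y + ∑_{i ≥ 1} aᵢ zᵢ| ≤ t / 2` is an interval of length `t / a₀` that already
lies in `[-1/2, 1/2]`. So all fibers of the slab over the unit-volume cube have length `t / a₀`, and
Fubini gives the volume. For `a = (a₁, a₂, a₃)` the condition reads `t ≤ a₁ - a₂ - a₃`.
-/

theorem MeasureTheory.Measure.prod_apply_eq_mul_of_measure_fiber_eq {X Y : Type*}
    [MeasurableSpace X] [MeasurableSpace Y] (μ : Measure X) (ν : Measure Y) [SFinite μ] [SFinite ν]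
    {S : Set (X × Y)} (hS : MeasurableSet S) {K : Set Y} (hK : MeasurableSet K) {m : ENNReal}
    (h_mem : ∀ z ∈ K, μ ((·, z) ⁻¹' S) = m) (h_notMem : ∀ z ∉ K, (·, z) ⁻¹' S = ∅) :
    μ.prod ν S = m * ν K := by
  have h_fiber : (fun z => μ ((·, z) ⁻¹' S)) = K.indicator fun _ => m := by
    ext z
    by_cases hz : z ∈ K
    · rw [indicator_of_mem hz, h_mem z hz]
    · rw [indicator_of_notMem hz, h_notMem z hz, measure_empty]
  rw [Measure.prod_apply_symm hS, h_fiber, lintegral_indicator hK, setLIntegral_const]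

theorem volume_unitCube (n : ℕ) : volume {z : Fin n → ℝ | ∀ i, |z i| ≤ 1 / 2} = 1 := by
  have h_pi : {z : Fin n → ℝ | ∀ i, |z i| ≤ 1 / 2} = univ.pi fun _ => Icc (-(1 / 2)) (1 / 2) := by
    ext z
    simp only [mem_ofPred_eq, mem_pi, mem_univ, forall_const, mem_Icc, abs_le]
  rw [h_pi, volume_pi_pi]
  norm_num [Real.volume_Icc]

theorem abs_sum_mul_le_of_abs_le_half {n : ℕ} (a z : Fin n → ℝ) (hz : ∀ i, |z i| ≤ 1 / 2) :
    |∑ i, a i * z i| ≤ (∑ i, |a i|) / 2 := by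
  calc |∑ i, a i * z i| ≤ ∑ i, |a i * z i| := Finset.abs_sum_le_sum_abs _ _
    _ ≤ ∑ i, |a i| * (1 / 2) := by
        gcongr with i
        rw [abs_mul]
        exact mul_le_mul_of_nonneg_left (hz i) (abs_nonneg _)
    _ = (∑ i, |a i|) / 2 := by rw [← Finset.sum_mul]; ring

theorem setOf_abs_le_half_and_abs_mul_add_le_eq_Icc {c s t : ℝ} (hc : 0 < c)
    (hs : |s| + t / 2 ≤ c / 2) :
    {y : ℝ | |y| ≤ 1 / 2 ∧ |c * y + s| ≤ t / 2} = Icc ((-(t / 2) - s) / c) ((t / 2 - s) / c) := by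
  have hs_lower := neg_abs_le s
  have hs_upper := le_abs_self s
  ext y
  simp only [mem_ofPred_eq, mem_Icc, div_le_iff₀ hc, le_div_iff₀ hc, abs_le]
  constructor
  · rintro ⟨-, hl, hr⟩
    constructor <;> linarith
  · rintro ⟨hl, hr⟩
    refine ⟨⟨?_, ?_⟩, ?_, ?_⟩ <;> nlinarith

theorem volume_slab_unitCube {n : ℕ} (a : Fin (n + 1) → ℝ) (t : ℝ) (ha : 0 < a 0)
    (ht : t + ∑ i : Fin n, |a i.succ| ≤ a 0) :
    volume {x : Fin (n + 1) → ℝ | (∀ i, |x i| ≤ 1 / 2) ∧ |∑ i, a i * x i| ≤ t / 2}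
      = ENNReal.ofReal (t / a 0) := by
  rw [← (volume_preserving_piFinSuccAbove (fun _ : Fin (n + 1) => ℝ) 0).symm.measure_preimage_equiv,
    show (volume : Measure (ℝ × (Fin n → ℝ))) = volume.prod volume from rfl]
  set e := MeasurableEquiv.piFinSuccAbove (fun _ : Fin (n + 1) => ℝ) 0
  set S := {x : Fin (n + 1) → ℝ | (∀ i, |x i| ≤ 1 / 2) ∧ |∑ i, a i * x i| ≤ t / 2}
  set K := {z : Fin n → ℝ | ∀ i, |z i| ≤ 1 / 2}
  have hS : MeasurableSet S := by measurability
  have hK : MeasurableSet K := by measurability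
  have h_fiber : ∀ z, (·, z) ⁻¹' (e.symm ⁻¹' S)
      = {y : ℝ | z ∈ K ∧ |y| ≤ 1 / 2 ∧ |a 0 * y + ∑ i, a i.succ * z i| ≤ t / 2} := by
    intro z
    ext y
    have h_cons : e.symm (y, z) = Fin.cons y z := Fin.insertNth_zero' (n := n) y z
    simp only [mem_preimage, mem_ofPred_eq, h_cons, S, K, Fin.forall_fin_succ, Fin.sum_univ_succ,
      Fin.cons_zero, Fin.cons_succ]
    tauto
  rw [Measure.prod_apply_eq_mul_of_measure_fiber_eq _ _ (e.symm.measurable hS) hK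
    (m := ENNReal.ofReal (t / a 0)), volume_unitCube, mul_one]
  · intro z hz
    have h_bound : |∑ i, a i.succ * z i| + t / 2 ≤ a 0 / 2 := by
      linarith [abs_sum_mul_le_of_abs_le_half (fun i => a i.succ) z hz]
    simp only [h_fiber, hz, true_and]
    rw [setOf_abs_le_half_and_abs_mul_add_le_eq_Icc ha h_bound, Real.volume_Icc]
    congr 1
    field_simp
    ring
  · intro z hz
    simp [h_fiber, hz]

theorem slab_cube3_g1_general
    (a1 a2 a3 t : ℝ)
    (h12 : a1 ≥ a2) (h23 : a2 ≥ a3) (h3 : a3 > 0)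
    (ht1 : t ≤ a1 - a2 - a3) :
    volume {x : EuclideanSpace ℝ (Fin 3) |
        (∀ i, |x i| ≤ 1 / 2) ∧ |a1 * x 0 + a2 * x 1 + a3 * x 2| ≤ t / 2}
      = ENNReal.ofReal (t / a1) := by
  have ha1 : 0 < a1 := by linarith
  have h_coeffs : ∑ i : Fin 2, |![a1, a2, a3] i.succ| = a2 + a3 := by
    simp [Fin.sum_univ_two, abs_of_pos h3, abs_of_pos (h3.trans_le h23)]
  rw [← (EuclideanSpace.volume_preserving_symm_measurableEquiv_toLp (Fin 3)).symm
    |>.measure_preimage_equiv]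
  convert volume_slab_unitCube ![a1, a2, a3] t ha1
    (by rw [h_coeffs]; show t + (a2 + a3) ≤ a1; linarith) using 3
  · simp [Fin.sum_univ_three]
  · rfl

theorem slab_cube3_g1
    (a1 a2 a3 t : ℝ) (hunit : a1 ^ 2 + a2 ^ 2 + a3 ^ 2 = 1)
    (h12 : a1 ≥ a2) (h23 : a2 ≥ a3) (h3 : a3 > 0) (hsum : a1 ≥ a2 + a3)
    (ht0 : 0 ≤ t) (ht1 : t ≤ a1 - a2 - a3) :
    volume {x : EuclideanSpace ℝ (Fin 3) |
        (∀ i, |x i| ≤ 1 / 2) ∧ |a1 * x 0 + a2 * x 1 + a3 * x 2| ≤ t / 2}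
      = ENNReal.ofReal (t / a1) :=
  slab_cube3_g1_general a1 a2 a3 t h12 h23 h3 ht1
end

section
/- Fix d ≥ 1. Let a ∈ S^{d-1} satisfy a1 ≥ a2 ≥ ... ≥ ad ≥ 0 with a1 > 0, and let t satisfy 0 ≤ t ≤ a1 - (a2 + ... + ad). Then the d-dimensional Lebesgue measure of the slab {x ∈ [-1/2,1/2]^d : |⟨a,x⟩| ≤ t/2} equals t/a1. -/
open MeasureTheory

/-!
Split off the first coordinate. For a fixed point `y` of the `(d-1)`-cube, the condition
`|a₁ x + ⟨a', y⟩| ≤ t/2` cuts out an interval of length `t / a₁` in `x`, and because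
`|⟨a', y⟩| ≤ (a₂ + ⋯ + a_d)/2 ≤ (a₁ - t)/2` this interval already lies in `[-1/2, 1/2]`.
So every fibre over the cube has measure `t / a₁`, and Fubini gives `t / a₁` times the
volume `1` of the cube.
-/

theorem MeasureTheory.Measure.prod_apply_eq_mul_of_fibers_eq {α β : Type*} [MeasurableSpace α]
    [MeasurableSpace β] {μ : Measure α} {ν : Measure β} [SFinite μ] [SFinite ν]
    {s : Set (α × β)} {C : Set β} {m : ENNReal} (hs : MeasurableSet s) (hC : MeasurableSet C)
    (hsC : ∀ p ∈ s, p.2 ∈ C) (hfiber : ∀ y ∈ C, μ ((·, y) ⁻¹' s) = m) :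
    μ.prod ν s = m * ν C := by
  have hfiber' : ∀ y, μ ((·, y) ⁻¹' s) = C.indicator (fun _ => m) y := by
    intro y
    by_cases hy : y ∈ C
    · rw [Set.indicator_of_mem hy, hfiber y hy]
    · have hempty : (·, y) ⁻¹' s = ∅ :=
        Set.eq_empty_of_forall_notMem fun x hx => hy (hsC (x, y) hx)
      rw [Set.indicator_of_notMem hy, hempty, measure_empty]
  rw [Measure.prod_apply_symm hs, lintegral_congr hfiber', lintegral_indicator_const hC]

theorem Real.volume_pi_abs_le_half (ι : Type*) [Fintype ι] :
    volume {y : ι → ℝ | ∀ i, |y i| ≤ 1 / 2} = 1 := by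
  have hcube : {y : ι → ℝ | ∀ i, |y i| ≤ 1 / 2} =
      Set.univ.pi fun _ => Set.Icc (-(1 / 2)) (1 / 2) := by
    ext y
    simp only [Set.mem_ofPred_eq, Set.mem_univ_pi, Set.mem_Icc, abs_le]
  rw [hcube, volume_pi_pi]
  norm_num

theorem abs_sum_mul_le_half_sum {ι : Type*} (s : Finset ι) {b y : ι → ℝ}
    (hb : ∀ i ∈ s, 0 ≤ b i) (hy : ∀ i ∈ s, |y i| ≤ 1 / 2) :
    |∑ i ∈ s, b i * y i| ≤ (∑ i ∈ s, b i) / 2 :=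
  calc |∑ i ∈ s, b i * y i| ≤ ∑ i ∈ s, b i * |y i| := by
        refine (Finset.abs_sum_le_sum_abs _ _).trans_eq (Finset.sum_congr rfl fun i hi => ?_)
        rw [abs_mul, abs_of_nonneg (hb i hi)]
    _ ≤ ∑ i ∈ s, b i * (1 / 2) :=
        Finset.sum_le_sum fun i hi => mul_le_mul_of_nonneg_left (hy i hi) (hb i hi)
    _ = (∑ i ∈ s, b i) / 2 := by rw [← Finset.sum_mul]; ring

theorem Real.volume_setOf_abs_le_half_and_abs_mul_add_le {c S t : ℝ} (hc : 0 < c)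
    (hS : |S| ≤ (c - t) / 2) :
    volume {x : ℝ | |x| ≤ 1 / 2 ∧ |c * x + S| ≤ t / 2} = ENNReal.ofReal (t / c) := by
  have hcube : ∀ x, |c * x + S| ≤ t / 2 → |x| ≤ 1 / 2 := fun x hx => by
    refine le_of_mul_le_mul_left ?_ hc
    calc c * |x| = |(c * x + S) - S| := by rw [add_sub_cancel_right, abs_mul, abs_of_pos hc]
      _ ≤ |c * x + S| + |S| := abs_sub _ _
      _ ≤ c * (1 / 2) := by linarith
  have hIcc : {x : ℝ | |x| ≤ 1 / 2 ∧ |c * x + S| ≤ t / 2} =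
      Set.Icc ((-(t / 2) - S) / c) ((t / 2 - S) / c) := by
    ext x
    rw [Set.mem_Icc, div_le_iff₀ hc, le_div_iff₀ hc]
    constructor
    · rintro ⟨-, hx⟩
      constructor <;> linarith [abs_le.mp hx]
    · rintro ⟨hl, hu⟩
      have hx : |c * x + S| ≤ t / 2 := abs_le.mpr ⟨by linarith, by linarith⟩
      exact ⟨hcube x hx, hx⟩
  rw [hIcc, Real.volume_Icc]
  congr 1
  field_simp
  ring

theorem EuclideanSpace.volume_setOf_eq_prod_volume_setOf_cons (d : ℕ)
    (P : (Fin (d + 1) → ℝ) → Prop) :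
    volume {x : EuclideanSpace ℝ (Fin (d + 1)) | P x} =
      volume.prod volume {p : ℝ × (Fin d → ℝ) | P (Fin.cons p.1 p.2)} := by
  let e : EuclideanSpace ℝ (Fin (d + 1)) ≃ᵐ ℝ × (Fin d → ℝ) :=
    (MeasurableEquiv.toLp 2 _).symm.trans (MeasurableEquiv.piFinSuccAbove (fun _ => ℝ) 0)
  have he : MeasurePreserving e :=
    (EuclideanSpace.volume_preserving_symm_measurableEquiv_toLp _).trans
      (volume_preserving_piFinSuccAbove _ 0)
  rw [← Measure.volume_eq_prod, ← he.measure_preimage_equiv]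
  congr 1 with x
  simp [e]

theorem slab_cube_parallelepiped_volume_general
    (d : ℕ) (a : Fin (d + 1) → ℝ) (t : ℝ)
    (hmono : Antitone a) (hlast : 0 ≤ a (Fin.last d)) (h0 : 0 < a 0)
    (ht1 : t ≤ a 0 - ∑ i ∈ Finset.univ.erase 0, a i) :
    volume {x : EuclideanSpace ℝ (Fin (d + 1)) |
        (∀ i, |x i| ≤ 1 / 2) ∧ |∑ i, a i * x i| ≤ t / 2}
      = ENNReal.ofReal (t / a 0) := by
  have ha : ∀ i, 0 ≤ a i := fun i => hlast.trans (hmono (Fin.le_last i))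
  have ht : t ≤ a 0 - ∑ j : Fin d, a j.succ := by
    rwa [Finset.sum_erase_eq_sub (Finset.mem_univ 0), Fin.sum_univ_succ,
      add_sub_cancel_left] at ht1
  rw [EuclideanSpace.volume_setOf_eq_prod_volume_setOf_cons d
    fun y => (∀ i, |y i| ≤ 1 / 2) ∧ |∑ i, a i * y i| ≤ t / 2]
  simp only [Fin.forall_fin_succ, Fin.sum_univ_succ, Fin.cons_zero, Fin.cons_succ]
  rw [Measure.prod_apply_eq_mul_of_fibers_eq (C := {y | ∀ j, |y j| ≤ 1 / 2})
    (by measurability) (by measurability) (fun p hp => hp.1.2), Real.volume_pi_abs_le_half,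
    mul_one]
  intro y (hy : ∀ j, |y j| ≤ 1 / 2)
  have hS : |∑ j, a j.succ * y j| ≤ (a 0 - t) / 2 :=
    (abs_sum_mul_le_half_sum _ (fun j _ => ha j.succ) (fun j _ => hy j)).trans (by linarith)
  convert Real.volume_setOf_abs_le_half_and_abs_mul_add_le h0 hS using 3
  simp only [Set.preimage_ofPred_eq, hy, implies_true, and_true]

theorem slab_cube_parallelepiped_volume
    (d : ℕ) (a : Fin (d + 1) → ℝ) (t : ℝ)
    (hunit : ∑ i, (a i) ^ 2 = 1)
    (hmono : Antitone a) (hlast : 0 ≤ a (Fin.last d)) (h0 : 0 < a 0)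
    (ht0 : 0 ≤ t) (ht1 : t ≤ a 0 - ∑ i ∈ Finset.univ.erase 0, a i) :
    volume {x : EuclideanSpace ℝ (Fin (d + 1)) |
        (∀ i, |x i| ≤ 1 / 2) ∧ |∑ i, a i * x i| ≤ t / 2}
      = ENNReal.ofReal (t / a 0) :=
  slab_cube_parallelepiped_volume_general d a t hmono hlast h0 ht1
end

section
/- Let a = (a1,a2) be a unit vector with a1 > a2 > 0 and let 0 ≤ t ≤ a1 - a2. Let M be an odd nonnegative integer. Then the integral over the slice {x ∈ [-1/2,1/2]^2 : ⟨a,x⟩ = t/2} of x1^M + x2^M with respect to 1-dimensional Hausdorff measure equals ((t+a2)^{M+1} - (t-a2)^{M+1}) / ((M+1) · 2^{M+1} · a1^{M+1} · a2). -/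
open MeasureTheory Set

/-!
For `|t| + |a2| ≤ a1` the slice is the whole chord of the line `a1 * x 0 + a2 * x 1 = t / 2`
between the horizontal sides of the square. The unit-speed parametrisation
`s ↦ (t/(2a1) - a2 s, a1 s)`, `|s| ≤ 1/(2a1)`, is an isometry from `ℝ`, so it carries Lebesgue
measure to `μH[1]` on the chord and the moment becomes a one-variable polynomial integral.
The `x 1 ^ M` term integrates to zero by oddness, and the `x 0 ^ M` term is the integral of a
power of an affine function.
-/

theorem isometry_add_smul_of_norm_eq_one {E : Type*} [SeminormedAddCommGroup E] [NormedSpace ℝ E]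
    (p v : E) (hv : ‖v‖ = 1) : Isometry fun s : ℝ => p + s • v :=
  Isometry.of_dist_eq fun x y => by
    rw [dist_add_left, dist_eq_norm, ← sub_smul, norm_smul, hv, mul_one, Real.dist_eq,
      Real.norm_eq_abs]

theorem Isometry.setIntegral_image_hausdorffMeasure {X Y E : Type*}
    [EMetricSpace X] [MeasurableSpace X] [BorelSpace X] [CompleteSpace X]
    [EMetricSpace Y] [MeasurableSpace Y] [BorelSpace Y]
    [NormedAddCommGroup E] [NormedSpace ℝ E]
    {f : X → Y} (hf : Isometry f) {d : ℝ} (hd : 0 ≤ d ∨ Function.Surjective f)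
    (g : Y → E) (s : Set X) :
    ∫ y in f '' s, g y ∂μH[d] = ∫ x in s, g (f x) ∂μH[d] := by
  have hrestrict : μH[d].restrict (f '' s) = (Measure.map f μH[d]).restrict (f '' s) := by
    rw [hf.map_hausdorffMeasure hd, Measure.restrict_restrict_of_subset (image_subset_range f s)]
  rw [hrestrict, hf.isClosedEmbedding.measurableEmbedding.setIntegral_map,
    preimage_image_eq _ hf.injective]

theorem integral_pow_neg_self_of_odd {n : ℕ} (hn : Odd n) (e : ℝ) :
    ∫ x in -e..e, x ^ n = 0 := by
  rw [integral_pow, hn.add_one.neg_pow, sub_self, zero_div]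

theorem integral_sub_mul_pow {b : ℝ} (hb : b ≠ 0) (c e : ℝ) (n : ℕ) :
    ∫ s in -e..e, (c - b * s) ^ n =
      ((c + b * e) ^ (n + 1) - (c - b * e) ^ (n + 1)) / ((n + 1) * b) := by
  rw [intervalIntegral.integral_comp_sub_mul (· ^ n) hb, integral_pow, smul_eq_mul, mul_neg,
    sub_neg_eq_add]
  field_simp

noncomputable def sliceLine (a1 a2 t s : ℝ) : EuclideanSpace ℝ (Fin 2) :=
  !₂[t / (2 * a1), 0] + s • !₂[-a2, a1]

section sliceLine

variable {a1 a2 t : ℝ}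

@[simp]
theorem sliceLine_apply_zero (s : ℝ) : sliceLine a1 a2 t s 0 = t / (2 * a1) - a2 * s := by
  simp only [sliceLine, PiLp.add_apply, PiLp.smul_apply, Matrix.cons_val_zero, smul_eq_mul]
  ring

@[simp]
theorem sliceLine_apply_one (s : ℝ) : sliceLine a1 a2 t s 1 = a1 * s := by
  simp [sliceLine, mul_comm]

theorem isometry_sliceLine (hunit : a1 ^ 2 + a2 ^ 2 = 1) : Isometry (sliceLine a1 a2 t) :=
  isometry_add_smul_of_norm_eq_one _ _ <| by
    simp [EuclideanSpace.norm_eq, Fin.sum_univ_two, add_comm, hunit]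

theorem slice_eq_image_sliceLine (ha1 : 0 < a1) (hchamber : |t| + |a2| ≤ a1) :
    {x : EuclideanSpace ℝ (Fin 2) | (∀ i, |x i| ≤ 1 / 2) ∧ a1 * x 0 + a2 * x 1 = t / 2} =
      sliceLine a1 a2 t '' Icc (-(2 * a1)⁻¹) (2 * a1)⁻¹ := by
  have hhalf : a1 * (2 * a1)⁻¹ = 1 / 2 := by field_simp
  ext x
  simp only [mem_ofPred_eq, mem_image, mem_Icc]
  constructor
  · rintro ⟨hbox, hline⟩
    have hx1 := abs_le.mp (hbox 1)
    refine ⟨x 1 / a1, ⟨?_, ?_⟩, ?_⟩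
    · rw [le_div_iff₀ ha1]; nlinarith
    · rw [div_le_iff₀ ha1]; nlinarith
    · ext i
      fin_cases i
      · simp only [Fin.zero_eta, sliceLine_apply_zero]
        field_simp
        linarith
      · simp only [Fin.mk_one, sliceLine_apply_one]
        field_simp
  · rintro ⟨s, ⟨hs₁, hs₂⟩, rfl⟩
    have hs : |s| ≤ (2 * a1)⁻¹ := abs_le.mpr ⟨hs₁, hs₂⟩
    refine ⟨fun i => ?_, ?_⟩
    · fin_cases i <;>
        simp only [Fin.zero_eta, Fin.mk_one, sliceLine_apply_zero, sliceLine_apply_one]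
      · calc |t / (2 * a1) - a2 * s| ≤ |t / (2 * a1)| + |a2 * s| := abs_sub _ _
          _ = |t| * (2 * a1)⁻¹ + |a2| * |s| := by
            rw [abs_div, abs_of_pos (by positivity : 0 < 2 * a1), abs_mul, div_eq_mul_inv]
          _ ≤ (|t| + |a2|) * (2 * a1)⁻¹ := by rw [add_mul]; gcongr
          _ ≤ 1 / 2 := by rw [← hhalf]; gcongr
      · rw [abs_mul, abs_of_pos ha1, ← hhalf]; gcongr
    · simp only [sliceLine_apply_zero, sliceLine_apply_one]
      field_simp
      ring

end sliceLine

theorem moment_slice_square_chamber1_odd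
    (a1 a2 t : ℝ) (M : ℕ) (hM : Odd M)
    (hunit : a1 ^ 2 + a2 ^ 2 = 1) (h12 : a1 > a2) (h2 : a2 > 0)
    (ht0 : 0 ≤ t) (ht1 : t ≤ a1 - a2) :
    ∫ x in {x : EuclideanSpace ℝ (Fin 2) |
        (∀ i, |x i| ≤ 1 / 2) ∧ a1 * x 0 + a2 * x 1 = t / 2},
        ((x 0) ^ M + (x 1) ^ M) ∂(μH[1])
      = ((t + a2) ^ (M + 1) - (t - a2) ^ (M + 1)) /
          ((M + 1) * 2 ^ (M + 1) * a1 ^ (M + 1) * a2) := by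
  have ha1 : 0 < a1 := h2.trans h12
  have hchamber : |t| + |a2| ≤ a1 := by rw [abs_of_nonneg ht0, abs_of_pos h2]; linarith
  rw [slice_eq_image_sliceLine ha1 hchamber,
    (isometry_sliceLine hunit).setIntegral_image_hausdorffMeasure (Or.inl zero_le_one),
    hausdorffMeasure_real, integral_Icc_eq_integral_Ioc,
    ← intervalIntegral.integral_of_le (by simp only [neg_le_self_iff, inv_nonneg]; positivity)]
  simp only [sliceLine_apply_zero, sliceLine_apply_one, mul_pow]
  rw [intervalIntegral.integral_add (Continuous.intervalIntegrable (by fun_prop) _ _)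
      (Continuous.intervalIntegrable (by fun_prop) _ _), integral_sub_mul_pow h2.ne',
    intervalIntegral.integral_const_mul, integral_pow_neg_self_of_odd hM, mul_zero, add_zero,
    ← div_eq_mul_inv, ← add_div, ← sub_div, div_pow, div_pow, mul_pow]
  field_simp
end

section
/- Let a = (a1,a2) be a unit vector with a1 > a2 > 0 and let 0 < t < a1 - a2. Then the second moment ∫_{slab(a,t)} (x1^2 + x2^2) dx over the slab {x ∈ [-1/2,1/2]^2 : |⟨a,x⟩| ≤ t/2} equals (t^3 + t)/(12·a1^3). -/
open MeasureTheory

theorem second_moment_slab_square_chamber1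
    (a1 a2 t : ℝ) (hunit : a1 ^ 2 + a2 ^ 2 = 1) (h12 : a1 > a2) (h2 : a2 > 0)
    (ht0 : 0 < t) (ht1 : t < a1 - a2) :
    ∫ x in {x : EuclideanSpace ℝ (Fin 2) |
        (∀ i, |x i| ≤ 1 / 2) ∧ |a1 * x 0 + a2 * x 1| ≤ t / 2},
        ((x 0) ^ 2 + (x 1) ^ 2)
      = (t ^ 3 + t) / (12 * a1 ^ 3) := by
  have ha1 : (0:ℝ) < a1 := h2.trans h12
  have ha1' : a1 ≠ 0 := ne_of_gt ha1
  set l : ℝ → ℝ := fun y => (-(t/2) - a2*y)/a1 with hl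
  set u : ℝ → ℝ := fun y => (t/2 - a2*y)/a1 with hu
  set S' : Set (ℝ × ℝ) :=
    {p : ℝ × ℝ | p.2 ∈ Set.Icc (-(1/2):ℝ) (1/2) ∧ p.1 ∈ Set.Icc (l p.2) (u p.2)} with hS'
  -- measurability of S'
  have hlc : Continuous l := by fun_prop
  have huc : Continuous u := by fun_prop
  have hS'meas : MeasurableSet S' := by
    have : S' = ((fun p : ℝ × ℝ => p.2) ⁻¹' Set.Icc (-(1/2):ℝ) (1/2)) ∩
        ({p : ℝ × ℝ | l p.2 ≤ p.1} ∩ {p : ℝ × ℝ | p.1 ≤ u p.2}) := by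
      ext p; simp [hS', Set.mem_Icc, and_assoc]
    rw [this]
    exact (measurable_snd measurableSet_Icc).inter
      (((isClosed_le (hlc.comp continuous_snd) continuous_fst).measurableSet).inter
        ((isClosed_le continuous_fst (huc.comp continuous_snd)).measurableSet))
  -- transfer to ℝ × ℝ
  have hφ : MeasurePreserving
      (⇑(((MeasurableEquiv.toLp 2 (Fin 2 → ℝ)).symm).trans MeasurableEquiv.finTwoArrow))
      volume volume :=
    (volume_preserving_finTwoArrow ℝ).comp
      (EuclideanSpace.volume_preserving_symm_measurableEquiv_toLp (Fin 2))
  have hset : {x : EuclideanSpace ℝ (Fin 2) |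
        (∀ i, |x i| ≤ 1 / 2) ∧ |a1 * x 0 + a2 * x 1| ≤ t / 2}
      = (⇑(((MeasurableEquiv.toLp 2 (Fin 2 → ℝ)).symm).trans MeasurableEquiv.finTwoArrow)) ⁻¹' S' := by
    ext x
    have hx : (((MeasurableEquiv.toLp 2 (Fin 2 → ℝ)).symm).trans MeasurableEquiv.finTwoArrow) x
        = (x 0, x 1) := rfl
    simp only [Set.mem_setOf_eq, Set.mem_preimage, hx, hS', Set.mem_Icc, Fin.forall_fin_two]
    constructor
    · rintro ⟨⟨h0, h1⟩, habs⟩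
      rw [abs_le] at h0 h1 habs
      constructor
      · constructor <;> linarith [h1.1, h1.2]
      · constructor
        · rw [hl, div_le_iff₀ ha1]; linarith [habs.1]
        · rw [hu, le_div_iff₀ ha1]; linarith [habs.2]
    · rintro ⟨⟨hy1, hy2⟩, hx1, hx2⟩
      rw [hl, div_le_iff₀ ha1] at hx1
      rw [hu, le_div_iff₀ ha1] at hx2
      refine ⟨⟨abs_le.mpr ⟨?_, ?_⟩, abs_le.mpr ⟨by linarith, by linarith⟩⟩,
        abs_le.mpr ⟨by linarith, by linarith⟩⟩
      · nlinarith
      · nlinarith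
  have htrans : (∫ x in {x : EuclideanSpace ℝ (Fin 2) |
        (∀ i, |x i| ≤ 1 / 2) ∧ |a1 * x 0 + a2 * x 1| ≤ t / 2},
        ((x 0) ^ 2 + (x 1) ^ 2)) = ∫ p in S', (p.1 ^ 2 + p.2 ^ 2) := by
    rw [hset]
    exact hφ.setIntegral_preimage_emb
      (((MeasurableEquiv.toLp 2 (Fin 2 → ℝ)).symm).trans MeasurableEquiv.finTwoArrow).measurableEmbedding
      (fun p => p.1 ^ 2 + p.2 ^ 2) S'
  rw [htrans]
  -- the inner integral computation
  have hlu : ∀ y : ℝ, l y ≤ u y := by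
    intro y; simp only [hl, hu]; (gcongr ?_ / a1) ; linarith
  -- inner integral for fixed y
  have hinner : ∀ y : ℝ, (∫ x in Set.Icc (l y) (u y), (x ^ 2 + y ^ 2))
      = t ^ 3 / (12 * a1 ^ 3) + (t / a1 ^ 3) * y ^ 2 := by
    intro y
    have hcalc : (∫ x in Set.Icc (l y) (u y), (x ^ 2 + y ^ 2))
        = ((u y) ^ 3 - (l y) ^ 3) / 3 + y ^ 2 * (u y - l y) := by
      rw [MeasureTheory.integral_Icc_eq_integral_Ioc, ← intervalIntegral.integral_of_le (hlu y)]
      have : ∫ x in (l y)..(u y), (x ^ 2 + y ^ 2)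
          = (fun x => x ^ 3 / 3 + y ^ 2 * x) (u y) - (fun x => x ^ 3 / 3 + y ^ 2 * x) (l y) := by
        refine intervalIntegral.integral_eq_sub_of_hasDerivAt
          (f := fun x => x ^ 3 / 3 + y ^ 2 * x) ?_ ?_
        · intro x hx
          have h1 : HasDerivAt (fun x : ℝ => x ^ 3 / 3) (x ^ 2) x := by
            simpa using (hasDerivAt_pow 3 x).div_const 3
          have h2 : HasDerivAt (fun x : ℝ => y ^ 2 * x) (y ^ 2) x := by
            simpa using (hasDerivAt_id x).const_mul (y ^ 2)
          exact h1.add h2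
        · exact ((continuous_pow 2).add continuous_const).intervalIntegrable (l y) (u y)
      rw [this]; ring
    rw [hcalc, hl, hu]
    field_simp
    linear_combination (288 * t * y ^ 2) * hunit
  -- Fubini
  have hInt : Integrable (S'.indicator fun p : ℝ × ℝ => p.1 ^ 2 + p.2 ^ 2) volume := by
    apply MeasureTheory.IntegrableOn.integrable_indicator _ hS'meas
    apply MeasureTheory.IntegrableOn.mono_set
      (t := Set.Icc ((-(1/2), -(1/2)) : ℝ × ℝ) ((1/2, 1/2) : ℝ × ℝ))
    · exact (continuous_fst.pow 2 |>.add (continuous_snd.pow 2)).continuousOn.integrableOn_compact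
        isCompact_Icc
    · rintro ⟨x, y⟩ ⟨hy, hx⟩
      have h1 := (hx.1 : l y ≤ x)
      have h2 := (hx.2 : x ≤ u y)
      rw [hl, div_le_iff₀ ha1] at h1
      rw [hu, le_div_iff₀ ha1] at h2
      simp only [Set.mem_Icc, Prod.mk_le_mk]
      have hy1 := hy.1; have hy2 := hy.2
      refine ⟨⟨?_, hy1⟩, ?_, hy2⟩ <;> nlinarith
  have hvol : (volume : Measure (ℝ × ℝ)) = (volume : Measure ℝ).prod volume :=
    rfl
  rw [← MeasureTheory.integral_indicator hS'meas]
  rw [hvol] at hInt ⊢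
  rw [MeasureTheory.integral_prod_symm _ hInt]
  have hsplit : ∀ y : ℝ,
      (∫ x : ℝ, S'.indicator (fun p : ℝ × ℝ => p.1 ^ 2 + p.2 ^ 2) (x, y))
      = (Set.Icc (-(1/2):ℝ) (1/2)).indicator
          (fun y => t ^ 3 / (12 * a1 ^ 3) + (t / a1 ^ 3) * y ^ 2) y := by
    intro y
    by_cases hy : y ∈ Set.Icc (-(1/2):ℝ) (1/2)
    · have hfun : (fun x : ℝ => S'.indicator (fun p : ℝ × ℝ => p.1 ^ 2 + p.2 ^ 2) (x, y))
          = (Set.Icc (l y) (u y)).indicator (fun x => x ^ 2 + y ^ 2) := by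
        funext x
        by_cases hx : x ∈ Set.Icc (l y) (u y)
        · rw [Set.indicator_of_mem hx, Set.indicator_of_mem (by exact ⟨hy, hx⟩)]
        · rw [Set.indicator_of_notMem hx, Set.indicator_of_notMem (fun h => hx h.2)]
      rw [hfun, MeasureTheory.integral_indicator measurableSet_Icc, hinner y,
        Set.indicator_of_mem hy]
    · have hfun : (fun x : ℝ => S'.indicator (fun p : ℝ × ℝ => p.1 ^ 2 + p.2 ^ 2) (x, y))
          = fun _ => (0:ℝ) := by
        funext x
        exact Set.indicator_of_notMem (fun h => hy h.1) _
      rw [hfun, MeasureTheory.integral_zero, Set.indicator_of_notMem hy]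
  simp_rw [hsplit]
  rw [MeasureTheory.integral_indicator measurableSet_Icc,
    MeasureTheory.integral_Icc_eq_integral_Ioc,
    ← intervalIntegral.integral_of_le (by norm_num : (-(1/2):ℝ) ≤ 1/2)]
  have : ∫ y in (-(1/2):ℝ)..(1/2), (t ^ 3 / (12 * a1 ^ 3) + (t / a1 ^ 3) * y ^ 2)
      = (fun y => t ^ 3 / (12 * a1 ^ 3) * y + (t / a1 ^ 3) * (y ^ 3 / 3)) (1/2)
        - (fun y => t ^ 3 / (12 * a1 ^ 3) * y + (t / a1 ^ 3) * (y ^ 3 / 3)) (-(1/2)) := by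
    refine intervalIntegral.integral_eq_sub_of_hasDerivAt
      (f := fun y => t ^ 3 / (12 * a1 ^ 3) * y + (t / a1 ^ 3) * (y ^ 3 / 3)) ?_ ?_
    · intro y hy
      have h1 : HasDerivAt (fun y : ℝ => t ^ 3 / (12 * a1 ^ 3) * y) (t ^ 3 / (12 * a1 ^ 3)) y := by
        simpa using (hasDerivAt_id y).const_mul (t ^ 3 / (12 * a1 ^ 3))
      have h2 : HasDerivAt (fun y : ℝ => (t / a1 ^ 3) * (y ^ 3 / 3)) ((t / a1 ^ 3) * y ^ 2) y := by
        have := ((hasDerivAt_pow 3 y).div_const 3).const_mul (t / a1 ^ 3)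
        simpa [mul_comm, mul_assoc, mul_left_comm] using this
      exact h1.add h2
    · exact (continuous_const.add (continuous_const.mul (continuous_pow 2))).intervalIntegrable _ _
  rw [this]
  field_simp
  ring
end

section
/- Let a = (a1,a2,a3) be a unit vector with a1 ≥ a2 ≥ a3 > 0 and let t satisfy a1 - a2 + a3 ≤ t ≤ a1 + a2 - a3. Then the 3-dimensional Lebesgue measure of the slab {x ∈ [-1/2,1/2]^3 : |⟨a,x⟩| ≤ t/2} equals 1 - a3^2/(12·a1·a2) - (a1 + a2 - t)^2/(4·a1·a2). -/
/-!
Slice the cube along `x₀`, whose coefficient `a1` is the largest. Over a point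
`(x₁, x₂)` with `c = a2 x₁ + a3 x₂` the fibre is an interval of length
`1 - ((w + c)₊ + (w - c)₊) / a1`, where `w = (a1 - t) / 2`; since `a2 + a3 ≤ a1 + t` no fibre is
empty, so this expression, not its positive part, is the length. The truncated powers
`x₊ⁿ / n!` are antiderivatives of one another, so integrating over `x₁` and then `x₂` gives the
inclusion–exclusion formula `1 - 2 Σ ± (w ± a2/2 ± a3/2)₊³ / (3! a1 a2 a3)`. In the chamber
exactly two of the four truncated cubes vanish, and the other two combine to the stated value.
-/

open MeasureTheory Set

noncomputable def truncPow (n : ℕ) (s : ℝ) : ℝ := max 0 s ^ n / n.factorial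

@[fun_prop]
theorem continuous_truncPow (n : ℕ) : Continuous (truncPow n) := by
  unfold truncPow; fun_prop

theorem truncPow_one (s : ℝ) : truncPow 1 s = max 0 s := by
  simp [truncPow]

theorem truncPow_of_nonneg {n : ℕ} {s : ℝ} (hs : 0 ≤ s) :
    truncPow n s = s ^ n / n.factorial := by
  rw [truncPow, max_eq_right hs]

theorem truncPow_of_nonpos {n : ℕ} {s : ℝ} (hn : n ≠ 0) (hs : s ≤ 0) : truncPow n s = 0 := by
  simp [truncPow, max_eq_left hs, hn]

theorem hasDerivAt_truncPow (n : ℕ) (s : ℝ) :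
    HasDerivAt (truncPow (n + 2)) (truncPow (n + 1) s) s := by
  refine hasDerivAt_of_hasDerivAt_of_ne' (x := 0) (fun y hy => ?_)
    (continuous_truncPow _).continuousAt (continuous_truncPow _).continuousAt s
  rcases hy.lt_or_gt with hneg | hpos
  · rw [truncPow_of_nonpos n.succ_ne_zero hneg.le]
    refine (hasDerivAt_const y 0).congr_of_eventuallyEq ?_
    filter_upwards [Iio_mem_nhds hneg] with x hx using truncPow_of_nonpos (by omega) (le_of_lt hx)
  · have h := (hasDerivAt_pow (n + 2) y).div_const ((n + 2).factorial : ℝ)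
    refine (h.congr_deriv ?_).congr_of_eventuallyEq ?_
    · rw [truncPow_of_nonneg hpos.le, Nat.factorial_succ]
      push_cast
      field_simp
      ring
    · filter_upwards [Ioi_mem_nhds hpos] with x hx using truncPow_of_nonneg (le_of_lt hx)

theorem integral_comp_add_mul_add_comp_sub_mul {f F : ℝ → ℝ} (hF : ∀ x, HasDerivAt F (f x) x)
    (hf : Continuous f) (p q : ℝ) {b : ℝ} (hb : b ≠ 0) :
    ∫ y in (-(1 / 2) : ℝ)..(1 / 2), (f (p + b * y) + f (q - b * y)) =
      (F (p + b / 2) - F (p - b / 2) + (F (q + b / 2) - F (q - b / 2))) / b := by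
  have hderiv : ∀ y, HasDerivAt (fun y => (F (p + b * y) - F (q - b * y)) / b)
      (f (p + b * y) + f (q - b * y)) y := by
    intro y
    have h₁ := (hF _).comp y (((hasDerivAt_id' y).const_mul b).const_add p)
    have h₂ := (hF _).comp y (((hasDerivAt_id' y).const_mul b).const_sub q)
    refine ((h₁.sub h₂).div_const b).congr_deriv ?_
    field_simp
    ring
  rw [intervalIntegral.integral_eq_sub_of_hasDerivAt (fun y _ => hderiv y)
    ((by fun_prop : Continuous fun y => f (p + b * y) + f (q - b * y)).intervalIntegrable _ _)]
  ring_nf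

theorem measurePreserving_euclideanSpace_fin_three_to_prod :
    MeasurePreserving (fun x : EuclideanSpace ℝ (Fin 3) => (x 2, x 1, x 0)) volume volume := by
  have e₂ : MeasurePreserving (fun y : Fin 2 → ℝ => (y 1, y 0)) volume volume :=
    (Measure.measurePreserving_swap).comp (volume_preserving_finTwoArrow ℝ)
  exact (((MeasurePreserving.id volume).prod e₂).comp
    (volume_preserving_piFinSuccAbove (fun _ : Fin 3 => ℝ) 2)).comp
    (EuclideanSpace.volume_preserving_symm_measurableEquiv_toLp (Fin 3))

theorem prod_setOf_mem_Icc_and_eq_ofReal_integral {E : Type*} [MeasurableSpace E]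
    {ν : Measure E} [SFinite ν] {α β : ℝ} (hαβ : α ≤ β) {P : ℝ → E → Prop}
    (hP : MeasurableSet {p : ℝ × E | P p.1 p.2}) {g : ℝ → ℝ} (hg : Continuous g)
    (hg₀ : ∀ z ∈ Icc α β, 0 ≤ g z) (hsec : ∀ z ∈ Icc α β, ν {e | P z e} = ENNReal.ofReal (g z)) :
    (volume.prod ν) {p : ℝ × E | p.1 ∈ Icc α β ∧ P p.1 p.2} =
      ENNReal.ofReal (∫ z in α..β, g z) := by
  have hsec' : ∀ z, ν (Prod.mk z ⁻¹' {p : ℝ × E | p.1 ∈ Icc α β ∧ P p.1 p.2}) =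
      (Icc α β).indicator (fun z => ENNReal.ofReal (g z)) z := by
    intro z
    change ν {e | z ∈ Icc α β ∧ P z e} = _
    by_cases hz : z ∈ Icc α β
    · simp only [hz, true_and, indicator_of_mem, hsec z hz]
    · simp [hz]
  have hm : MeasurableSet {p : ℝ × E | p.1 ∈ Icc α β ∧ P p.1 p.2} :=
    (measurable_fst measurableSet_Icc).inter hP
  rw [Measure.prod_apply hm, lintegral_congr hsec',
    lintegral_indicator measurableSet_Icc, intervalIntegral.integral_of_le hαβ,
    ← integral_Icc_eq_integral_Ioc, ofReal_integral_eq_lintegral_ofReal hg.integrableOn_Icc]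
  filter_upwards [ae_restrict_mem measurableSet_Icc] with z hz using hg₀ z hz

/-- The `max` terms are the overhangs of `a • [-1/2, 1/2] + c` beyond `[-t/2, t/2]`; when the
fibre is empty the argument of `ofReal` is negative. -/
theorem volume_setOf_mem_Icc_and_abs_le {a : ℝ} (ha : 0 < a) (c t : ℝ) :
    volume {x : ℝ | x ∈ Icc (-(1 / 2)) (1 / 2) ∧ |a * x + c| ≤ t / 2} =
      ENNReal.ofReal (1 - (max 0 ((a - t) / 2 + c) + max 0 ((a - t) / 2 - c)) / a) := by
  have hset : {x : ℝ | x ∈ Icc (-(1 / 2)) (1 / 2) ∧ |a * x + c| ≤ t / 2} =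
      Icc (max (-(1 / 2)) ((-(t / 2) - c) / a)) (min (1 / 2) ((t / 2 - c) / a)) := by
    ext x
    simp only [mem_ofPred_eq, mem_Icc, max_le_iff, le_min_iff, abs_le, div_le_iff₀ ha,
      le_div_iff₀ ha]
    constructor <;> rintro ⟨⟨_, _⟩, _, _⟩ <;> refine ⟨⟨?_, ?_⟩, ?_, ?_⟩ <;> linarith
  have hmin : min (1 / 2) ((t / 2 - c) / a) = 1 / 2 - max 0 ((a - t) / 2 + c) / a := by
    rcases le_total 0 ((a - t) / 2 + c) with h | h
    · rw [max_eq_right h, min_eq_right (by rw [div_le_iff₀ ha]; linarith)]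
      field_simp
      ring
    · rw [max_eq_left h, min_eq_left (by rw [le_div_iff₀ ha]; linarith)]
      ring
  have hmax : max (-(1 / 2)) ((-(t / 2) - c) / a) = -(1 / 2) + max 0 ((a - t) / 2 - c) / a := by
    rcases le_total 0 ((a - t) / 2 - c) with h | h
    · rw [max_eq_right h, max_eq_right (by rw [le_div_iff₀ ha]; linarith)]
      field_simp
      ring
    · rw [max_eq_left h, max_eq_left (by rw [div_le_iff₀ ha]; linarith)]
      ring
  rw [hset, Real.volume_Icc, hmin, hmax]
  congr 1
  ring

theorem max_zero_add_max_zero_le {a c t : ℝ} (ha : 0 ≤ a) (ht : 0 ≤ t) (hc : |c| ≤ (a + t) / 2) :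
    max 0 ((a - t) / 2 + c) + max 0 ((a - t) / 2 - c) ≤ a := by
  rw [abs_le] at hc
  rcases le_total 0 ((a - t) / 2 + c) with h₁ | h₁ <;>
  rcases le_total 0 ((a - t) / 2 - c) with h₂ | h₂ <;>
  simp only [max_eq_left, max_eq_right, h₁, h₂] <;> linarith

theorem integral_slab_fiberLength {a₂ : ℝ} (ha₂ : a₂ ≠ 0) (a₁ a₃ w z : ℝ) :
    ∫ y in (-(1 / 2) : ℝ)..(1 / 2),
        (1 - (max 0 (w + (a₂ * y + a₃ * z)) + max 0 (w - (a₂ * y + a₃ * z))) / a₁) =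
      1 - (truncPow 2 (w + a₃ * z + a₂ / 2) - truncPow 2 (w + a₃ * z - a₂ / 2) +
        (truncPow 2 (w - a₃ * z + a₂ / 2) - truncPow 2 (w - a₃ * z - a₂ / 2))) / a₂ / a₁ := by
  have hcont : Continuous fun y =>
      truncPow 1 (w + a₃ * z + a₂ * y) + truncPow 1 (w - a₃ * z - a₂ * y) := by
    fun_prop
  calc _ = ∫ y in (-(1 / 2) : ℝ)..(1 / 2),
        (1 - (truncPow 1 (w + a₃ * z + a₂ * y) + truncPow 1 (w - a₃ * z - a₂ * y)) / a₁) := by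
        congr 1
        ext y
        simp only [truncPow_one]
        ring_nf
    _ = 1 - (∫ y in (-(1 / 2) : ℝ)..(1 / 2),
        (truncPow 1 (w + a₃ * z + a₂ * y) + truncPow 1 (w - a₃ * z - a₂ * y))) / a₁ := by
        rw [intervalIntegral.integral_sub intervalIntegrable_const
          ((hcont.div_const a₁).intervalIntegrable _ _), intervalIntegral.integral_div]
        norm_num
    _ = _ := by
        rw [integral_comp_add_mul_add_comp_sub_mul (hasDerivAt_truncPow 0) (continuous_truncPow 1)
          _ _ ha₂]

theorem integral_slab_sectionArea {a₃ : ℝ} (ha₃ : a₃ ≠ 0) (a₁ a₂ w : ℝ) :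
    ∫ z in (-(1 / 2) : ℝ)..(1 / 2),
        (1 - (truncPow 2 (w + a₃ * z + a₂ / 2) - truncPow 2 (w + a₃ * z - a₂ / 2) +
          (truncPow 2 (w - a₃ * z + a₂ / 2) - truncPow 2 (w - a₃ * z - a₂ / 2))) / a₂ / a₁) =
      1 - 2 * (truncPow 3 (w + a₂ / 2 + a₃ / 2) - truncPow 3 (w + a₂ / 2 - a₃ / 2) -
        truncPow 3 (w - a₂ / 2 + a₃ / 2) + truncPow 3 (w - a₂ / 2 - a₃ / 2)) / a₃ / a₂ / a₁ := by
  let g : ℝ → ℝ → ℝ := fun p z => truncPow 2 (p + a₃ * z) + truncPow 2 (p - a₃ * z)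
  have hg : ∀ p, Continuous (g p) := fun p => by fun_prop
  calc _ = ∫ z in (-(1 / 2) : ℝ)..(1 / 2),
        (1 - (g (w + a₂ / 2) z - g (w - a₂ / 2) z) / a₂ / a₁) := by
        congr 1
        ext z
        simp only [g]
        ring_nf
    _ = 1 - ((∫ z in (-(1 / 2) : ℝ)..(1 / 2), g (w + a₂ / 2) z) -
          ∫ z in (-(1 / 2) : ℝ)..(1 / 2), g (w - a₂ / 2) z) / a₂ / a₁ := by
        rw [intervalIntegral.integral_sub intervalIntegrable_const
          ((((hg _).intervalIntegrable _ _).sub ((hg _).intervalIntegrable _ _)).div_const a₂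
            |>.div_const a₁),
          intervalIntegral.integral_div, intervalIntegral.integral_div,
          intervalIntegral.integral_sub ((hg _).intervalIntegrable _ _)
            ((hg _).intervalIntegrable _ _)]
        norm_num
    _ = _ := by
        simp only [g, integral_comp_add_mul_add_comp_sub_mul (hasDerivAt_truncPow 1)
          (continuous_truncPow 2) _ _ ha₃]
        ring

theorem volume_cube_slab_prod {a₁ a₂ a₃ t : ℝ} (ha₁ : 0 < a₁) (ha₂ : 0 < a₂) (ha₃ : 0 < a₃)
    (ht : 0 ≤ t) (hfib : a₂ + a₃ ≤ a₁ + t) :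
    volume {p : ℝ × ℝ × ℝ | p.1 ∈ Icc (-(1 / 2)) (1 / 2) ∧ p.2.1 ∈ Icc (-(1 / 2)) (1 / 2) ∧
        p.2.2 ∈ Icc (-(1 / 2)) (1 / 2) ∧ |a₁ * p.2.2 + a₂ * p.2.1 + a₃ * p.1| ≤ t / 2} =
      ENNReal.ofReal (1 - 2 * (truncPow 3 ((a₁ - t) / 2 + a₂ / 2 + a₃ / 2) -
        truncPow 3 ((a₁ - t) / 2 + a₂ / 2 - a₃ / 2) - truncPow 3 ((a₁ - t) / 2 - a₂ / 2 + a₃ / 2) +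
        truncPow 3 ((a₁ - t) / 2 - a₂ / 2 - a₃ / 2)) / a₃ / a₂ / a₁) := by
  set w := (a₁ - t) / 2
  have hlen : ∀ z ∈ Icc (-(1 / 2) : ℝ) (1 / 2), ∀ y ∈ Icc (-(1 / 2) : ℝ) (1 / 2),
      0 ≤ 1 - (max 0 (w + (a₂ * y + a₃ * z)) + max 0 (w - (a₂ * y + a₃ * z))) / a₁ := by
    rintro z ⟨hz₁, hz₂⟩ y ⟨hy₁, hy₂⟩
    have hc : |a₂ * y + a₃ * z| ≤ (a₁ + t) / 2 := by
      rw [abs_le]; constructor <;> nlinarith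
    rw [sub_nonneg, div_le_one ha₁]
    exact max_zero_add_max_zero_le ha₁.le ht hc
  have hsection : ∀ z ∈ Icc (-(1 / 2) : ℝ) (1 / 2),
      (volume.prod volume) {e : ℝ × ℝ | e.1 ∈ Icc (-(1 / 2)) (1 / 2) ∧
        e.2 ∈ Icc (-(1 / 2)) (1 / 2) ∧ |a₁ * e.2 + a₂ * e.1 + a₃ * z| ≤ t / 2} =
      ENNReal.ofReal (1 - (truncPow 2 (w + a₃ * z + a₂ / 2) - truncPow 2 (w + a₃ * z - a₂ / 2) +
          (truncPow 2 (w - a₃ * z + a₂ / 2) - truncPow 2 (w - a₃ * z - a₂ / 2))) / a₂ / a₁) := by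
    intro z hz
    refine (prod_setOf_mem_Icc_and_eq_ofReal_integral (by norm_num)
      (P := fun y x => x ∈ Icc (-(1 / 2)) (1 / 2) ∧ |a₁ * x + a₂ * y + a₃ * z| ≤ t / 2)
      ?_ ?_ (hlen z hz) ?_).trans ?_
    · measurability
    · fun_prop
    · intro y _
      rw [← volume_setOf_mem_Icc_and_abs_le ha₁]
      simp only [add_assoc]
    · rw [integral_slab_fiberLength ha₂.ne']
  rw [Measure.volume_eq_prod, ← integral_slab_sectionArea ha₃.ne']
  refine prod_setOf_mem_Icc_and_eq_ofReal_integral (by norm_num)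
    (P := fun z (e : ℝ × ℝ) => e.1 ∈ Icc (-(1 / 2)) (1 / 2) ∧ e.2 ∈ Icc (-(1 / 2)) (1 / 2) ∧
      |a₁ * e.2 + a₂ * e.1 + a₃ * z| ≤ t / 2) ?_ (by fun_prop) ?_ hsection
  · measurability
  · intro z hz
    rw [← integral_slab_fiberLength ha₂.ne']
    exact intervalIntegral.integral_nonneg (by norm_num) (hlen z hz)

theorem slab_cube3_g4_general
    (a1 a2 a3 t : ℝ)
    (h12 : a1 ≥ a2) (h23 : a2 ≥ a3) (h3 : a3 > 0)
    (ht0 : a1 - a2 + a3 ≤ t) (ht1 : t ≤ a1 + a2 - a3) :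
    volume {x : EuclideanSpace ℝ (Fin 3) |
        (∀ i, |x i| ≤ 1 / 2) ∧ |a1 * x 0 + a2 * x 1 + a3 * x 2| ≤ t / 2}
      = ENNReal.ofReal (1 - a3 ^ 2 / (12 * a1 * a2) - (a1 + a2 - t) ^ 2 / (4 * a1 * a2)) := by
  have ha2 : 0 < a2 := h3.trans_le h23
  have ha1 : 0 < a1 := ha2.trans_le h12
  have hset : {x : EuclideanSpace ℝ (Fin 3) |
        (∀ i, |x i| ≤ 1 / 2) ∧ |a1 * x 0 + a2 * x 1 + a3 * x 2| ≤ t / 2} =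
      (fun x : EuclideanSpace ℝ (Fin 3) => (x 2, x 1, x 0)) ⁻¹'
        {p : ℝ × ℝ × ℝ | p.1 ∈ Icc (-(1 / 2)) (1 / 2) ∧ p.2.1 ∈ Icc (-(1 / 2)) (1 / 2) ∧
          p.2.2 ∈ Icc (-(1 / 2)) (1 / 2) ∧ |a1 * p.2.2 + a2 * p.2.1 + a3 * p.1| ≤ t / 2} := by
    ext x
    simp only [Fin.forall_fin_succ, Fin.succ_zero_eq_one, Fin.succ_one_eq_two, IsEmpty.forall_iff,
      and_true, mem_preimage, mem_ofPred_eq, mem_Icc, ← abs_le]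
    tauto
  rw [hset, measurePreserving_euclideanSpace_fin_three_to_prod.measure_preimage
    (by measurability), volume_cube_slab_prod ha1 ha2 h3 (by linarith) (by linarith)]
  congr 1
  rw [truncPow_of_nonneg (by linarith), truncPow_of_nonneg (by linarith),
    truncPow_of_nonpos (by norm_num) (by linarith), truncPow_of_nonpos (by norm_num) (by linarith)]
  field_simp
  ring

theorem slab_cube3_g4
    (a1 a2 a3 t : ℝ) (hunit : a1 ^ 2 + a2 ^ 2 + a3 ^ 2 = 1)
    (h12 : a1 ≥ a2) (h23 : a2 ≥ a3) (h3 : a3 > 0)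
    (ht0 : a1 - a2 + a3 ≤ t) (ht1 : t ≤ a1 + a2 - a3) :
    volume {x : EuclideanSpace ℝ (Fin 3) |
        (∀ i, |x i| ≤ 1 / 2) ∧ |a1 * x 0 + a2 * x 1 + a3 * x 2| ≤ t / 2}
      = ENNReal.ofReal (1 - a3 ^ 2 / (12 * a1 * a2) - (a1 + a2 - t) ^ 2 / (4 * a1 * a2)) :=
  slab_cube3_g4_general a1 a2 a3 t h12 h23 h3 ht0 ht1
end
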